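/- arXiv:1704.02131 — 4 statements merged into one kernel-verified Lean document; each statement's English description precedes it below -/
import Mathlib

section
/- Let (X, ⟨·,·⟩) be a real Hilbert space and J : X → ℝ a functional with J(0) = 0 which is sequentially weakly upper semicontinuous (whenever a sequence (xₙ) converges weakly to x in X, one has limsup J(xₙ) ≤ J(x)) and Gâteaux differentiable, in the sense that there is a map J' : X → X such that for all x, v ∈ X the function t ↦ J(x + t·v) is differentiable at t = 0 with derivative ⟨J'(x), v⟩. Assume that for some r > 0 there exists x̂ ∈ X with ‖x̂‖² ≤ r which is a global maximum of J on the ball B_r = {x ∈ X : ‖x‖² ≤ r} and which satisfies ⟨J'(x̂), x̂⟩ < 2 J(x̂). Then there exists a nonempty open interval I ⊆ (0, +∞) such that for every λ ∈ I the equation x = λ·J'(x) has a solution x ≠ 0 with ‖x‖² < r. -/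
/-!
For `λ > 0` minimise `E_λ x = ‖x‖² - 2λ J x` over the ball `‖x‖² ≤ r`. The ball is weakly
sequentially compact and `E_λ` is weakly sequentially lower semicontinuous, so a minimiser
exists; where it lies in the open ball it is a critical point, i.e. `x = λ • J' x`.

Put `λ₀ = r / (2 J x̂)`. Since `⟪J' x̂, x̂⟫ < 2 J x̂`, if `‖x̂‖² = r` and `λ ≤ λ₀` then shrinking
`x̂` radially lowers `E_λ`. This keeps minimisers off the sphere (a minimiser on the sphere
would make `x̂` one as well), and at `λ₀` it produces a `y` with `E_λ₀ y < 0`. Hence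
`E_λ y < 0` for all `λ` in an interval `(a, λ₀)`, and there the minimiser is not `0`.
-/

open Filter Topology Set
open scoped RealInnerProductSpace

section

variable {X : Type*} [NormedAddCommGroup X] [InnerProductSpace ℝ X]
  {J : X → ℝ} {J' : X → X} {lam r : ℝ}

def WeaklyTendsto (u : ℕ → X) (x : X) : Prop :=
  ∀ v : X, Tendsto (fun n => ⟪u n, v⟫) atTop (𝓝 ⟪x, v⟫)

theorem WeaklyTendsto.norm_le_of_tendsto_norm {u : ℕ → X} {x : X} {s : ℝ}
    (h : WeaklyTendsto u x) (hs : Tendsto (fun n => ‖u n‖) atTop (𝓝 s)) : ‖x‖ ≤ s := by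
  have hsq : ‖x‖ ^ 2 ≤ s * ‖x‖ := by
    rw [← real_inner_self_eq_norm_sq]
    exact le_of_tendsto_of_tendsto' (h x) (hs.mul_const ‖x‖)
      fun n => real_inner_le_norm (u n) x
  have hs0 : 0 ≤ s := ge_of_tendsto' hs fun n => norm_nonneg (u n)
  nlinarith [norm_nonneg x]

/-- Reduced to the sequential Banach–Alaoglu theorem on the separable closed span `K` of the
sequence: projecting `v` orthogonally onto `K` does not change the pairings `⟪u n, v⟫`. -/
theorem exists_weaklyTendsto_subseq [CompleteSpace X] {u : ℕ → X} {C : ℝ}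
    (hC : ∀ n, ‖u n‖ ≤ C) : ∃ x : X, ∃ φ : ℕ → ℕ, StrictMono φ ∧ WeaklyTendsto (u ∘ φ) x := by
  set K := (Submodule.span ℝ (range u)).topologicalClosure
  have : TopologicalSpace.SeparableSpace K := by
    refine TopologicalSpace.IsSeparable.separableSpace ?_
    rw [Submodule.topologicalClosure_coe]
    exact (TopologicalSpace.IsSeparable.span (countable_range u).isSeparable).closure
  have hu : ∀ n, u n ∈ K := fun n =>
    Submodule.le_topologicalClosure _ (Submodule.subset_span (mem_range_self n))
  let f : ℕ → StrongDual ℝ K := fun n => (innerSL ℝ (u n)).comp K.subtypeL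
  have hf : ∀ n, StrongDual.toWeakDual (f n) ∈ WeakDual.toStrongDual ⁻¹' Metric.closedBall 0 C :=
    fun n => by
      have : ‖f n‖ ≤ C :=
        ContinuousLinearMap.opNorm_le_bound _ ((norm_nonneg _).trans (hC 0)) fun k =>
          (norm_inner_le_norm _ _).trans (mul_le_mul_of_nonneg_right (hC n) (norm_nonneg _))
      exact (dist_zero_right (f n)).le.trans this
  obtain ⟨ℓ, -, φ, hφ, hlim⟩ := WeakDual.isSeqCompact_closedBall ℝ K 0 C hf
  set x := (InnerProductSpace.toDual ℝ K).symm (WeakDual.toStrongDual ℓ)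
  refine ⟨x, φ, hφ, fun v => ?_⟩
  have hpair : ∀ w : K, ⟪w, K.orthogonalProjectionOnto v⟫ = ⟪(w : X), v⟫ :=
    fun w => Submodule.inner_orthogonalProjectionOnto_eq_of_mem_left w v
  have hℓ : ℓ (K.orthogonalProjectionOnto v) = ⟪(x : X), v⟫ := by
    rw [← hpair, InnerProductSpace.toDual_symm_apply]
    rfl
  rw [← hℓ]
  convert ((WeakDual.eval_continuous (K.orthogonalProjectionOnto v)).tendsto ℓ).comp hlim
    using 1
  funext n
  exact (hpair ⟨u (φ n), hu (φ n)⟩).symm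

theorem HasDerivAt.nonneg_of_isMinOn_Icc {f : ℝ → ℝ} {d : ℝ} (hf : HasDerivAt f d 0)
    (hmin : IsMinOn f (Icc 0 1) 0) : 0 ≤ d := by
  have hcone : (1 : ℝ) ∈ posTangentConeAt (Icc 0 1) 0 :=
    mem_posTangentConeAt_of_segment_subset (by simp [segment_eq_Icc])
  simpa using hmin.localize.hasFDerivWithinAt_nonneg hf.hasFDerivAt.hasFDerivWithinAt hcone

theorem IsMinOn.nonneg_of_hasDerivAt_inward {Φ : X → ℝ} {d : ℝ} {y : X}
    (hmin : IsMinOn Φ {x | ‖x‖ ^ 2 ≤ r} y) (hy : ‖y‖ ^ 2 ≤ r)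
    (hd : HasDerivAt (fun t : ℝ => Φ (y + t • -y)) d 0) : 0 ≤ d := by
  refine hd.nonneg_of_isMinOn_Icc fun t ht => ?_
  have hseg : y + t • -y = (1 - t) • y := by rw [sub_smul, one_smul, smul_neg, sub_eq_add_neg]
  have hball : ‖(1 - t) • y‖ ^ 2 ≤ r := by
    have h1 : (1 - t) ^ 2 ≤ 1 := by nlinarith [ht.1, ht.2]
    rw [norm_smul, mul_pow, Real.norm_eq_abs, sq_abs]
    exact (mul_le_of_le_one_left (sq_nonneg _) h1).trans hy
  simpa [hseg] using hmin (show y + t • -y ∈ {x | ‖x‖ ^ 2 ≤ r} by rw [hseg]; exact hball)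

def energy (J : X → ℝ) (lam : ℝ) (x : X) : ℝ := ‖x‖ ^ 2 - 2 * lam * J x

theorem hasDerivAt_energy_line {x v : X} {d : ℝ}
    (hJ : HasDerivAt (fun t : ℝ => J (x + t • v)) d 0) :
    HasDerivAt (fun t : ℝ => energy J lam (x + t • v)) (2 * ⟪x, v⟫ - 2 * lam * d) 0 := by
  have hline : HasDerivAt (fun t : ℝ => x + t • v) v 0 := by
    simpa using ((hasDerivAt_id (0 : ℝ)).smul_const v).const_add x
  have := hline.norm_sq.sub (hJ.const_mul (2 * lam))
  simp only [zero_smul, add_zero] at this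
  exact this

theorem not_isMinOn_energy {y : X}
    (hG : HasDerivAt (fun t : ℝ => J (y + t • -y)) ⟪J' y, -y⟫ 0)
    (hcond : ⟪J' y, y⟫ < 2 * J y) (hlam : 0 < lam) (hlam_le : 2 * lam * J y ≤ r)
    (hy : ‖y‖ ^ 2 = r) : ¬ IsMinOn (energy J lam) {x | ‖x‖ ^ 2 ≤ r} y := by
  intro hmin
  have hd := hmin.nonneg_of_hasDerivAt_inward hy.le (hasDerivAt_energy_line hG)
  rw [inner_neg_right, inner_neg_right, real_inner_self_eq_norm_sq, hy] at hd
  nlinarith [mul_lt_mul_of_pos_left hcond hlam]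

theorem energy_le_of_weaklyTendsto
    (hwusc : ∀ (x : X) (u : ℕ → X), WeaklyTendsto u x → limsup (fun n => J (u n)) atTop ≤ J x)
    (hlam : 0 < lam) {u : ℕ → X} {x : X} {s m : ℝ} (hux : WeaklyTendsto u x)
    (hs : Tendsto (fun n => ‖u n‖) atTop (𝓝 s))
    (hm : Tendsto (fun n => energy J lam (u n)) atTop (𝓝 m)) : energy J lam x ≤ m := by
  have hJ : Tendsto (fun n => J (u n)) atTop (𝓝 ((s ^ 2 - m) / (2 * lam))) := by
    have hsplit : (fun n => J (u n)) = fun n => (‖u n‖ ^ 2 - energy J lam (u n)) / (2 * lam) := by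
      funext n
      field_simp
      simp only [energy]
      ring
    rw [hsplit]
    exact ((hs.pow 2).sub hm).div_const _
  have hJx : (s ^ 2 - m) / (2 * lam) ≤ J x := hJ.limsup_eq ▸ hwusc x u hux
  have hxs : ‖x‖ ≤ s := hux.norm_le_of_tendsto_norm hs
  rw [div_le_iff₀ (by positivity)] at hJx
  have : ‖x‖ ^ 2 ≤ s ^ 2 := pow_le_pow_left₀ (norm_nonneg x) hxs 2
  simp only [energy]
  linarith

theorem exists_isMinOn_energy [CompleteSpace X]
    (hwusc : ∀ (x : X) (u : ℕ → X), WeaklyTendsto u x → limsup (fun n => J (u n)) atTop ≤ J x)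
    (hbdd : BddAbove (J '' {x | ‖x‖ ^ 2 ≤ r})) (hr : 0 ≤ r) (hlam : 0 < lam) :
    ∃ x : X, ‖x‖ ^ 2 ≤ r ∧ IsMinOn (energy J lam) {x | ‖x‖ ^ 2 ≤ r} x := by
  set B := {x : X | ‖x‖ ^ 2 ≤ r}
  have hne : (energy J lam '' B).Nonempty :=
    ⟨_, mem_image_of_mem _ (show (0 : X) ∈ B by simpa [B] using hr)⟩
  have hbdd' : BddBelow (energy J lam '' B) := by
    obtain ⟨M, hM⟩ := hbdd
    refine ⟨-(2 * lam * M), ?_⟩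
    rintro _ ⟨y, hy, rfl⟩
    have := mul_le_mul_of_nonneg_left (hM (mem_image_of_mem J hy)) (by positivity : 0 ≤ 2 * lam)
    simp only [energy]
    nlinarith [sq_nonneg ‖y‖]
  obtain ⟨e, -, he, heB⟩ := exists_seq_tendsto_sInf hne hbdd'
  choose z hzB hze using heB
  have hz_norm : ∀ n, ‖z n‖ ∈ Icc 0 √r := fun n =>
    ⟨norm_nonneg _, (Real.le_sqrt (norm_nonneg _) hr).2 (hzB n)⟩
  obtain ⟨s, hs, ψ, hψ, hzψ⟩ := isCompact_Icc.tendsto_subseq hz_norm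
  obtain ⟨x, φ, hφ, hx⟩ := exists_weaklyTendsto_subseq fun n => (hz_norm (ψ n)).2
  have hxm : energy J lam x ≤ sInf (energy J lam '' B) := by
    refine energy_le_of_weaklyTendsto hwusc hlam hx (hzψ.comp hφ.tendsto_atTop) ?_
    simpa only [Function.comp_def, hze] using he.comp (hψ.comp hφ).tendsto_atTop
  have hxB : ‖x‖ ^ 2 ≤ r := (Real.le_sqrt (norm_nonneg _) hr).1
    ((hx.norm_le_of_tendsto_norm (hzψ.comp hφ.tendsto_atTop)).trans hs.2)
  exact ⟨x, hxB, fun y hy => hxm.trans (csInf_le hbdd' (mem_image_of_mem _ hy))⟩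

theorem norm_sq_lt_of_isMinOn_energy {xhat x : X}
    (hG : HasDerivAt (fun t : ℝ => J (xhat + t • -xhat)) ⟪J' xhat, -xhat⟫ 0)
    (hcond : ⟪J' xhat, xhat⟫ < 2 * J xhat) (hmem : ‖xhat‖ ^ 2 ≤ r)
    (hmax : IsMaxOn J {x | ‖x‖ ^ 2 ≤ r} xhat) (hlam : 0 < lam) (hlam_le : 2 * lam * J xhat ≤ r)
    (hx : ‖x‖ ^ 2 ≤ r) (hmin : IsMinOn (energy J lam) {x | ‖x‖ ^ 2 ≤ r} x) : ‖x‖ ^ 2 < r := by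
  refine hx.lt_of_ne fun hxr => ?_
  have hJ : 2 * lam * J x ≤ 2 * lam * J xhat := by gcongr; exact isMaxOn_iff.1 hmax x hx
  have hle : ‖x‖ ^ 2 - 2 * lam * J x ≤ ‖xhat‖ ^ 2 - 2 * lam * J xhat :=
    isMinOn_iff.1 hmin xhat hmem
  have hnorm : ‖xhat‖ ^ 2 = r := by linarith
  have heq : energy J lam xhat = energy J lam x := by simp only [energy]; linarith
  refine not_isMinOn_energy hG hcond hlam hlam_le hnorm (isMinOn_iff.2 fun y hy => ?_)
  exact heq ▸ isMinOn_iff.1 hmin y hy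

theorem eq_smul_of_isMinOn_energy {x : X}
    (hG : ∀ v : X, HasDerivAt (fun t : ℝ => J (x + t • v)) ⟪J' x, v⟫ 0)
    (hmin : IsMinOn (energy J lam) {x | ‖x‖ ^ 2 ≤ r} x) (hx : ‖x‖ ^ 2 < r) : x = lam • J' x := by
  have hnhds : {x : X | ‖x‖ ^ 2 ≤ r} ∈ 𝓝 x :=
    have hopen : IsOpen {y : X | ‖y‖ ^ 2 < r} := isOpen_lt (by fun_prop) continuous_const
    mem_of_superset (hopen.mem_nhds hx) fun y (hy : ‖y‖ ^ 2 < r) => show ‖y‖ ^ 2 ≤ r from hy.le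
  have hcrit : ∀ v : X, 2 * ⟪x, v⟫ - 2 * lam * ⟪J' x, v⟫ = 0 := fun v => by
    have hloc : IsLocalMin (fun t : ℝ => energy J lam (x + t • v)) 0 := by
      have h := hmin.isLocalMin hnhds
      rw [← show x + (0 : ℝ) • v = x by simp] at h
      exact h.comp_continuous (g := fun t : ℝ => x + t • v) (by fun_prop)
    exact hloc.hasDerivAt_eq_zero (hasDerivAt_energy_line (hG v))
  have := hcrit (x - lam • J' x)
  rw [← sub_eq_zero, ← inner_self_eq_zero (𝕜 := ℝ), inner_sub_left, real_inner_smul_left]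
  linarith

theorem exists_ne_zero_eq_smul_of_energy_neg [CompleteSpace X] (hJ0 : J 0 = 0)
    (hwusc : ∀ (x : X) (u : ℕ → X), WeaklyTendsto u x → limsup (fun n => J (u n)) atTop ≤ J x)
    (hG : ∀ x v : X, HasDerivAt (fun t : ℝ => J (x + t • v)) ⟪J' x, v⟫ 0) {xhat : X}
    (hmem : ‖xhat‖ ^ 2 ≤ r) (hmax : IsMaxOn J {x | ‖x‖ ^ 2 ≤ r} xhat)
    (hcond : ⟪J' xhat, xhat⟫ < 2 * J xhat) (hlam : 0 < lam) (hlam_le : 2 * lam * J xhat ≤ r)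
    {y : X} (hy : ‖y‖ ^ 2 ≤ r) (hneg : energy J lam y < 0) :
    ∃ x : X, x ≠ 0 ∧ ‖x‖ ^ 2 < r ∧ x = lam • J' x := by
  obtain ⟨x, hx, hmin⟩ :=
    exists_isMinOn_energy hwusc hmax.bddAbove ((sq_nonneg _).trans hmem) hlam
  have hlt := norm_sq_lt_of_isMinOn_energy (hG xhat (-xhat)) hcond hmem hmax hlam hlam_le hx hmin
  refine ⟨x, ?_, hlt, eq_smul_of_isMinOn_energy (hG x) hmin hlt⟩
  rintro rfl
  have h0 : energy J lam 0 = 0 := by simp [energy, hJ0]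
  linarith [isMinOn_iff.1 hmin y hy]

theorem IsMaxOn.inner_nonneg_of_hasDerivAt {xhat : X}
    (hmax : IsMaxOn J {x | ‖x‖ ^ 2 ≤ r} xhat) (hmem : ‖xhat‖ ^ 2 ≤ r)
    (hG : HasDerivAt (fun t : ℝ => J (xhat + t • -xhat)) ⟪J' xhat, -xhat⟫ 0) :
    0 ≤ ⟪J' xhat, xhat⟫ := by
  simpa [inner_neg_right] using hmax.neg.nonneg_of_hasDerivAt_inward hmem hG.neg

theorem exists_energy_neg {xhat : X}
    (hG : HasDerivAt (fun t : ℝ => J (xhat + t • -xhat)) ⟪J' xhat, -xhat⟫ 0)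
    (hcond : ⟪J' xhat, xhat⟫ < 2 * J xhat) (hmem : ‖xhat‖ ^ 2 ≤ r) (hlam : 0 < lam)
    (hlam_eq : 2 * lam * J xhat = r) : ∃ y : X, ‖y‖ ^ 2 ≤ r ∧ energy J lam y < 0 := by
  by_contra! h
  have hxhat : energy J lam xhat = ‖xhat‖ ^ 2 - r := by rw [energy, hlam_eq]
  have hnorm : ‖xhat‖ ^ 2 = r := le_antisymm hmem (by linarith [h xhat hmem])
  refine not_isMinOn_energy hG hcond hlam hlam_eq.le hnorm (isMinOn_iff.2 fun y hy => ?_)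
  rw [hxhat, hnorm, sub_self]
  exact h y hy

end

/-- Ricceri's abstract result (Theorem C of the paper): if `J` is sequentially weakly upper
semicontinuous, Gâteaux differentiable with `J 0 = 0`, and for some `r > 0` a global maximum
`x̂` of `J` on the ball `{‖x‖² ≤ r}` satisfies `⟪J' x̂, x̂⟫ < 2 J x̂`, then there is a nonempty
open interval `I ⊆ (0, ∞)` such that for each `λ ∈ I` the equation `x = λ • J' x` has a
nonzero solution with `‖x‖² < r`. -/
theorem stmt_0
    {X : Type*} [NormedAddCommGroup X] [InnerProductSpace ℝ X] [CompleteSpace X]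
    (J : X → ℝ) (J' : X → X)
    (hJ0 : J 0 = 0)
    (hwusc : ∀ (x : X) (xn : ℕ → X),
      (∀ v : X, Tendsto (fun n => (inner ℝ (xn n) v : ℝ)) atTop (𝓝 (inner ℝ x v))) →
      Filter.limsup (fun n => J (xn n)) atTop ≤ J x)
    (hG : ∀ x v : X, HasDerivAt (fun t : ℝ => J (x + t • v)) (inner ℝ (J' x) v : ℝ) 0)
    (r : ℝ) (hr : 0 < r)
    (xhat : X) (hmem : ‖xhat‖ ^ 2 ≤ r)
    (hmax : ∀ x : X, ‖x‖ ^ 2 ≤ r → J x ≤ J xhat)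
    (hcond : (inner ℝ (J' xhat) xhat : ℝ) < 2 * J xhat) :
    ∃ a b : ℝ, 0 ≤ a ∧ a < b ∧
      ∀ lam ∈ Set.Ioo a b, ∃ x : X, x ≠ 0 ∧ ‖x‖ ^ 2 < r ∧ x = lam • J' x := by
  have hmax' : IsMaxOn J {x | ‖x‖ ^ 2 ≤ r} xhat := hmax
  have hJ : 0 < J xhat := by linarith [hmax'.inner_nonneg_of_hasDerivAt hmem (hG xhat (-xhat))]
  set lam₀ := r / (2 * J xhat)
  have hlam₀ : 2 * lam₀ * J xhat = r := by
    simp only [lam₀]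
    field_simp
  obtain ⟨y, hy, hneg⟩ :=
    exists_energy_neg (hG xhat (-xhat)) hcond hmem (by positivity) hlam₀
  have hJy : 0 < J y := by
    simp only [energy] at hneg
    nlinarith [sq_nonneg ‖y‖]
  refine ⟨‖y‖ ^ 2 / (2 * J y), lam₀, by positivity, ?_, fun lam ⟨hlam_gt, hlam_lt⟩ => ?_⟩
  · rw [div_lt_iff₀ (by positivity)]
    simp only [energy] at hneg
    linarith
  · have hlam : 0 < lam := (by positivity : (0 : ℝ) ≤ _).trans_lt hlam_gt
    rw [div_lt_iff₀ (by positivity)] at hlam_gt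
    refine exists_ne_zero_eq_smul_of_energy_neg hJ0 hwusc hG hmem hmax' hcond hlam ?_ hy
      (by simp only [energy]; linarith)
    rw [← hlam₀]
    gcongr
end

section
/- Let f : [0, ∞) → [0, ∞) be continuous with f(0) = 0 and set F(ξ) = ∫₀^ξ f(t) dt. Let a > 0 and assume f(ξ)·ξ ≤ 2·F(ξ) for every ξ ∈ [0, a]. Define the truncation f̃ : ℝ → ℝ by f̃(ξ) = 0 for ξ ≤ 0, f̃(ξ) = f(ξ) for 0 < ξ ≤ a, and f̃(ξ) = f(a) for ξ > a, and set F̃(ξ) = ∫₀^ξ f̃(t) dt. Then f̃(ξ)·ξ ≤ 2·F̃(ξ) for all ξ ∈ ℝ, and consequently the function ξ ↦ F̃(ξ)/ξ² is non-increasing on (0, +∞). -/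
/-!
On `(-∞, 0]` both sides of `f̃ ξ ξ ≤ 2 F̃ ξ` vanish, on `(0, a]` the inequality is the hypothesis, and
beyond `a` the primitive grows linearly, `F̃ ξ = F a + f a (ξ - a)`, so the inequality at `a` propagates:
`2 F̃ ξ - f a ξ ≥ f a (ξ - a) ≥ 0`. Since `f̃` is continuous, `F̃' = f̃`, and `f̃ ξ ξ ≤ 2 F̃ ξ` says exactly
that the derivative of `F̃ ξ / ξ²` is nonpositive.
-/

open Set intervalIntegral

theorem antitoneOn_div_pow_of_deriv_mul_le {G g : ℝ → ℝ} {n : ℕ}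
    (hG : ∀ x > 0, HasDerivAt G (g x) x) (hg : ∀ x > 0, g x * x ≤ n * G x) :
    AntitoneOn (fun x ↦ G x / x ^ n) (Ioi 0) := by
  have hderiv : ∀ x > 0, HasDerivAt (fun x ↦ G x / x ^ n)
      ((g x * x ^ n - G x * (n * x ^ (n - 1))) / (x ^ n) ^ 2) x :=
    fun x hx ↦ (hG x hx).div (hasDerivAt_pow n x) (pow_ne_zero n hx.ne')
  refine antitoneOn_of_hasDerivWithinAt_nonpos (convex_Ioi 0)
    (f' := fun x ↦ (g x * x ^ n - G x * (n * x ^ (n - 1))) / (x ^ n) ^ 2)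
    (fun x hx ↦ (hderiv x hx).continuousAt.continuousWithinAt) (fun x hx ↦ ?_) (fun x hx ↦ ?_)
  · rw [interior_Ioi] at hx ⊢
    exact (hderiv x hx).hasDerivWithinAt
  · rw [interior_Ioi] at hx
    have hx : 0 < x := hx
    -- multiplying by `x` absorbs the truncated exponent `n - 1`
    have hnum : x * (g x * x ^ n - G x * (n * x ^ (n - 1))) = x ^ n * (g x * x - n * G x) := by
      cases n <;> simp [pow_succ] <;> ring
    have hnum_nonpos : g x * x ^ n - G x * (n * x ^ (n - 1)) ≤ 0 := by
      refine nonpos_of_mul_nonpos_right ?_ hx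
      rw [hnum]
      exact mul_nonpos_of_nonneg_of_nonpos (by positivity) (by linarith [hg x hx])
    exact div_nonpos_of_nonpos_of_nonneg hnum_nonpos (by positivity)

noncomputable def posTruncation (f : ℝ → ℝ) (a ξ : ℝ) : ℝ :=
  if ξ ≤ 0 then 0 else if ξ ≤ a then f ξ else f a

section posTruncation

variable {f : ℝ → ℝ} {a : ℝ}

theorem posTruncation_eq_comp_clamp (hf0 : f 0 = 0) (ha : 0 ≤ a) (ξ : ℝ) :
    posTruncation f a ξ = f (max 0 (min a ξ)) := by
  unfold posTruncation
  split_ifs with h₀ hξa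
  · rw [min_eq_right (h₀.trans ha), max_eq_left h₀, hf0]
  · rw [min_eq_right hξa, max_eq_right (not_le.1 h₀).le]
  · rw [min_eq_left (not_le.1 hξa).le, max_eq_right ha]

theorem continuous_posTruncation (hf : ContinuousOn f (Icc 0 a)) (hf0 : f 0 = 0) (ha : 0 ≤ a) :
    Continuous (posTruncation f a) := by
  rw [funext (posTruncation_eq_comp_clamp hf0 ha)]
  exact hf.comp_continuous (continuous_const.max (continuous_const.min continuous_id))
    fun ξ ↦ ⟨le_max_left _ _, max_le ha (min_le_left _ _)⟩

theorem integral_posTruncation_of_nonpos {ξ : ℝ} (hξ : ξ ≤ 0) :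
    ∫ t in 0..ξ, posTruncation f a t = 0 := by
  refine (integral_congr fun t ht ↦ ?_).trans integral_zero
  rw [uIcc_of_ge hξ] at ht
  exact if_pos ht.2

theorem integral_posTruncation_of_mem_Icc (hf0 : f 0 = 0) {ξ : ℝ} (hξ : ξ ∈ Icc 0 a) :
    ∫ t in 0..ξ, posTruncation f a t = ∫ t in 0..ξ, f t := by
  refine integral_congr fun t ht ↦ ?_
  rw [uIcc_of_le hξ.1] at ht
  unfold posTruncation
  split_ifs with h₀ hta
  · rw [le_antisymm h₀ ht.1, hf0]
  · rfl
  · exact absurd (ht.2.trans hξ.2) hta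

theorem integral_posTruncation_of_le (hf : ContinuousOn f (Icc 0 a)) (hf0 : f 0 = 0) (ha : 0 ≤ a)
    {ξ : ℝ} (hξ : a ≤ ξ) :
    ∫ t in 0..ξ, posTruncation f a t = (∫ t in 0..a, f t) + f a * (ξ - a) := by
  have hcont := continuous_posTruncation hf hf0 ha
  have hconst : ∫ t in a..ξ, posTruncation f a t = ∫ _ in a..ξ, f a := by
    refine integral_congr fun t ht ↦ ?_
    rw [uIcc_of_le hξ] at ht
    unfold posTruncation
    split_ifs with h₀ hta
    · rw [le_antisymm (ht.1.trans h₀) ha, hf0]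
    · rw [le_antisymm hta ht.1]
    · rfl
  rw [← integral_add_adjacent_intervals (hcont.intervalIntegrable 0 a) (hcont.intervalIntegrable a ξ),
    integral_posTruncation_of_mem_Icc hf0 (right_mem_Icc.2 ha), hconst, integral_const, smul_eq_mul,
    mul_comm]

theorem posTruncation_mul_le_two_mul_integral (hf : ContinuousOn f (Icc 0 a)) (hf0 : f 0 = 0)
    (ha : 0 ≤ a) (hfa : 0 ≤ f a) (hineq : ∀ ξ ∈ Icc 0 a, f ξ * ξ ≤ 2 * ∫ t in 0..ξ, f t) (ξ : ℝ) :
    posTruncation f a ξ * ξ ≤ 2 * ∫ t in 0..ξ, posTruncation f a t := by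
  rcases le_or_gt ξ 0 with h₀ | h₀
  · rw [integral_posTruncation_of_nonpos h₀]
    simp [posTruncation, h₀]
  rcases le_or_gt ξ a with hξa | hξa
  · rw [integral_posTruncation_of_mem_Icc hf0 ⟨h₀.le, hξa⟩]
    simpa [posTruncation, not_le.2 h₀, hξa] using hineq ξ ⟨h₀.le, hξa⟩
  · rw [integral_posTruncation_of_le hf hf0 ha hξa.le]
    simp only [posTruncation, if_neg (not_le.2 h₀), if_neg (not_le.2 hξa)]
    nlinarith [hineq a ⟨ha, le_rfl⟩]

end posTruncation

/-- If `f ξ * ξ ≤ 2 F ξ` on `[0,a]`, then the truncation `f̃` (equal to `0` on `(-∞,0]`,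
to `f` on `(0,a]` and to `f a` on `(a,∞)`) with primitive `F̃` satisfies
`f̃ ξ * ξ ≤ 2 F̃ ξ` for all `ξ ∈ ℝ`, and consequently `ξ ↦ F̃ ξ / ξ²` is non-increasing
on `(0, ∞)`. -/
theorem stmt_3
    (f : ℝ → ℝ) (hf_cont : ContinuousOn f (Set.Ici 0))
    (hf_nonneg : ∀ ξ ≥ (0:ℝ), 0 ≤ f ξ) (hf0 : f 0 = 0)
    (F : ℝ → ℝ) (hF : ∀ ξ, F ξ = ∫ t in (0:ℝ)..ξ, f t)
    (a : ℝ) (ha : 0 < a)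
    (hineq : ∀ ξ ∈ Set.Icc (0:ℝ) a, f ξ * ξ ≤ 2 * F ξ)
    (ftil : ℝ → ℝ)
    (hftil : ∀ ξ : ℝ, ftil ξ = if ξ ≤ 0 then 0 else if ξ ≤ a then f ξ else f a)
    (Ftil : ℝ → ℝ) (hFtil : ∀ ξ, Ftil ξ = ∫ t in (0:ℝ)..ξ, ftil t) :
    (∀ ξ : ℝ, ftil ξ * ξ ≤ 2 * Ftil ξ) ∧
      (∀ ξ₁ ξ₂ : ℝ, 0 < ξ₁ → ξ₁ ≤ ξ₂ → Ftil ξ₂ / ξ₂ ^ 2 ≤ Ftil ξ₁ / ξ₁ ^ 2) := by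
  obtain rfl : F = fun ξ ↦ ∫ t in 0..ξ, f t := funext hF
  obtain rfl : ftil = posTruncation f a := funext hftil
  obtain rfl : Ftil = fun ξ ↦ ∫ t in 0..ξ, posTruncation f a t := funext hFtil
  have hf : ContinuousOn f (Icc 0 a) := hf_cont.mono Icc_subset_Ici_self
  have hkey := posTruncation_mul_le_two_mul_integral hf hf0 ha.le (hf_nonneg a ha.le) hineq
  have hanti := antitoneOn_div_pow_of_deriv_mul_le (n := 2)
    (fun x _ ↦ ((continuous_posTruncation hf hf0 ha.le).integral_hasStrictDerivAt 0 x).hasDerivAt)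
    (fun x _ ↦ by exact_mod_cast hkey x)
  exact ⟨hkey, fun ξ₁ ξ₂ h₁ h₁₂ ↦ hanti h₁ (h₁.trans_le h₁₂) h₁₂⟩
end

section
/- Let f : [0, ∞) → [0, ∞) be continuous with f(0) = 0 and set F(ξ) = ∫₀^ξ f(t) dt. Let a > 0 and assume the function ξ ↦ F(ξ)/ξ² is non-increasing on (0, a] and that σ₁ := lim_{ξ→0⁺} F(ξ)/ξ² exists and is finite. Define the truncation f̃ and its primitive F̃ as usual. Then σ₁ = sup_{ξ>0} F̃(ξ)/ξ², and for all ξ ≥ 0 one has F̃(ξ) ≤ σ₁·ξ² and f̃(ξ) ≤ 2·σ₁·ξ. -/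
/-!
On `(0, a]` the ratio `F ξ / ξ²` decreases from its limit `σ₁` at `0⁺`, so `F ξ ≤ σ₁ ξ²`; its
derivative `(f ξ ξ - 2 F ξ) / ξ³` is nonpositive, so `f ξ ≤ 2 F ξ / ξ ≤ 2 σ₁ ξ`. Beyond `a` the
truncated primitive is affine, `F̃ ξ = F a + f a (ξ - a) ≤ σ₁ a² + 2 σ₁ a (ξ - a) ≤ σ₁ ξ²`, using
`σ₁ ≥ 0` (as `F ≥ 0`). Since `F̃ = F` near `0⁺`, no bound below `σ₁` works for `F̃ ξ / ξ²`.
-/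

open Filter Topology Set MeasureTheory

lemma AntitoneOn.le_of_tendsto_nhdsGT {G : ℝ → ℝ} {b c σ x : ℝ} (hG : AntitoneOn G (Ioc b c))
    (hlim : Tendsto G (𝓝[>] b) (𝓝 σ)) (hx : x ∈ Ioc b c) : G x ≤ σ :=
  ge_of_tendsto hlim <| mem_of_superset (Ioc_mem_nhdsGT hx.1) fun _ hy ↦
    hG ⟨hy.1, hy.2.trans hx.2⟩ hx hy.2

lemma accPt_Ioc_right {b x : ℝ} (hbx : b < x) : AccPt x (𝓟 (Ioc b x)) := by
  rw [accPt_principal_iff_nhdsWithin, Ioc_sdiff_right, nhdsWithin_Ioo_eq_nhdsLT hbx]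
  infer_instance

lemma HasDerivAt.mul_le_two_mul_of_antitoneOn_div_sq {F : ℝ → ℝ} {c x : ℝ}
    (hF : HasDerivAt F c x) (hx : 0 < x)
    (hanti : AntitoneOn (fun t ↦ F t / t ^ 2) (Ioc 0 x)) : c * x ≤ 2 * F x := by
  have hderiv :
      HasDerivAt (fun t ↦ F t / t ^ 2) ((c * x ^ 2 - F x * (2 * x)) / (x ^ 2) ^ 2) x := by
    simpa using hF.fun_div (hasDerivAt_pow 2 x) (by positivity)
  have hnonpos := (hderiv.hasDerivWithinAt).nonpos_of_antitoneOn (accPt_Ioc_right hx) hanti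
  rw [div_le_iff₀ (by positivity), zero_mul] at hnonpos
  nlinarith

lemma ContinuousOn.hasDerivAt_intervalIntegral_Ici {f : ℝ → ℝ} {b x : ℝ}
    (hf : ContinuousOn f (Ici b)) (hx : b < x) :
    HasDerivAt (fun u ↦ ∫ t in b..u, f t) (f x) x :=
  intervalIntegral.integral_hasDerivAt_right
    ((hf.mono Icc_subset_Ici_self).intervalIntegrable_of_Icc hx.le)
    ((hf.mono Ioi_subset_Ici_self).stronglyMeasurableAtFilter isOpen_Ioi x hx)
    (hf.continuousAt (Ici_mem_nhds hx))

section Bounds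

variable {f F : ℝ → ℝ} {a σ x : ℝ}

lemma le_mul_sq_of_antitoneOn_div_sq (hanti : AntitoneOn (fun t ↦ F t / t ^ 2) (Ioc 0 a))
    (hlim : Tendsto (fun t ↦ F t / t ^ 2) (𝓝[>] 0) (𝓝 σ)) (hx : x ∈ Ioc 0 a) :
    F x ≤ σ * x ^ 2 :=
  (div_le_iff₀ (by positivity [hx.1])).mp (hanti.le_of_tendsto_nhdsGT hlim hx)

lemma le_two_mul_of_antitoneOn_div_sq (hF : HasDerivAt F (f x) x)
    (hanti : AntitoneOn (fun t ↦ F t / t ^ 2) (Ioc 0 a))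
    (hlim : Tendsto (fun t ↦ F t / t ^ 2) (𝓝[>] 0) (𝓝 σ)) (hx : x ∈ Ioc 0 a) :
    f x ≤ 2 * σ * x := by
  have hslope := hF.mul_le_two_mul_of_antitoneOn_div_sq hx.1
    (hanti.mono (Ioc_subset_Ioc_right hx.2))
  have hF_le := le_mul_sq_of_antitoneOn_div_sq hanti hlim hx
  nlinarith [hx.1]

end Bounds

noncomputable def truncation (f : ℝ → ℝ) (a ξ : ℝ) : ℝ :=
  if ξ ≤ 0 then 0 else if ξ ≤ a then f ξ else f a

section Truncation

variable {f : ℝ → ℝ} {a σ ξ : ℝ}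

lemma truncation_eqOn_Ioc : EqOn (truncation f a) f (Ioc 0 a) := fun ξ hξ ↦ by
  simp [truncation, not_le.2 hξ.1, hξ.2]

lemma truncation_eqOn_Ici (ha : 0 < a) : EqOn (truncation f a) (fun _ ↦ f a) (Ici a) :=
  fun ξ hξ ↦ by
    rcases (mem_Ici.mp hξ).eq_or_lt with rfl | h
    · simp [truncation, not_le.2 ha]
    · simp [truncation, not_le.2 h, not_le.2 (ha.trans h)]

lemma integral_truncation_of_le (hξ : ξ ∈ Icc 0 a) :
    ∫ t in (0:ℝ)..ξ, truncation f a t = ∫ t in (0:ℝ)..ξ, f t := by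
  rw [intervalIntegral.integral_of_le hξ.1, intervalIntegral.integral_of_le hξ.1]
  exact setIntegral_congr_fun measurableSet_Ioc
    (truncation_eqOn_Ioc.mono (Ioc_subset_Ioc_right hξ.2))

lemma integral_truncation_of_ge (hf : IntervalIntegrable f volume 0 a)
    (ha : 0 < a) (hξ : a ≤ ξ) :
    ∫ t in (0:ℝ)..ξ, truncation f a t = (∫ t in (0:ℝ)..a, f t) + f a * (ξ - a) := by
  have hconst : EqOn (truncation f a) (fun _ ↦ f a) (uIcc a ξ) := by
    rw [uIcc_of_le hξ]; exact (truncation_eqOn_Ici ha).mono Icc_subset_Ici_self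
  have hint₁ : IntervalIntegrable (truncation f a) volume 0 a :=
    hf.congr (by rw [uIoc_of_le ha.le]; exact truncation_eqOn_Ioc.symm)
  have hint₂ : IntervalIntegrable (truncation f a) volume a ξ :=
    (intervalIntegrable_const (c := f a)).congr (hconst.symm.mono uIoc_subset_uIcc)
  rw [← intervalIntegral.integral_add_adjacent_intervals hint₁ hint₂,
    integral_truncation_of_le ⟨ha.le, le_rfl⟩, intervalIntegral.integral_congr hconst]
  simp [mul_comm]

lemma truncation_le_two_mul (ha : 0 < a) (hσ : 0 ≤ σ) (hf : ∀ ξ ∈ Ioc 0 a, f ξ ≤ 2 * σ * ξ)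
    (hξ : 0 ≤ ξ) : truncation f a ξ ≤ 2 * σ * ξ := by
  rcases hξ.eq_or_lt with rfl | hξ₀
  · simp [truncation]
  rcases le_or_gt ξ a with hξa | hξa
  · rw [truncation_eqOn_Ioc ⟨hξ₀, hξa⟩]
    exact hf ξ ⟨hξ₀, hξa⟩
  · rw [truncation_eqOn_Ici ha hξa.le]
    nlinarith [hf a ⟨ha, le_rfl⟩]

lemma integral_truncation_le_mul_sq (hfi : IntervalIntegrable f volume 0 a)
    (ha : 0 < a) (hσ : 0 ≤ σ) (hF : ∀ ξ ∈ Ioc 0 a, ∫ t in (0:ℝ)..ξ, f t ≤ σ * ξ ^ 2)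
    (hfa : f a ≤ 2 * σ * a) (hξ : 0 ≤ ξ) :
    ∫ t in (0:ℝ)..ξ, truncation f a t ≤ σ * ξ ^ 2 := by
  rcases hξ.eq_or_lt with rfl | hξ₀
  · simp
  rcases le_or_gt ξ a with hξa | hξa
  · rw [integral_truncation_of_le ⟨hξ, hξa⟩]
    exact hF ξ ⟨hξ₀, hξa⟩
  · rw [integral_truncation_of_ge hfi ha hξa.le]
    nlinarith [hF a ⟨ha, le_rfl⟩, mul_nonneg hσ (sq_nonneg (ξ - a))]

end Truncation

theorem stmt_4_general
    (f : ℝ → ℝ) (hf_cont : ContinuousOn f (Set.Ici 0))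
    (hf_nonneg : ∀ ξ ≥ (0:ℝ), 0 ≤ f ξ)
    (F : ℝ → ℝ) (hF : ∀ ξ, F ξ = ∫ t in (0:ℝ)..ξ, f t)
    (a : ℝ) (ha : 0 < a)
    (hmono : ∀ ξ₁ ξ₂ : ℝ, 0 < ξ₁ → ξ₁ ≤ ξ₂ → ξ₂ ≤ a → F ξ₂ / ξ₂ ^ 2 ≤ F ξ₁ / ξ₁ ^ 2)
    (ftil : ℝ → ℝ)
    (hftil : ∀ ξ : ℝ, ftil ξ = if ξ ≤ 0 then 0 else if ξ ≤ a then f ξ else f a)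
    (Ftil : ℝ → ℝ) (hFtil : ∀ ξ, Ftil ξ = ∫ t in (0:ℝ)..ξ, ftil t)
    (σ₁ : ℝ)
    (hσ₁ : Tendsto (fun ξ => F ξ / ξ ^ 2) (nhdsWithin 0 (Set.Ioi 0)) (𝓝 σ₁)) :
    IsLUB {y : ℝ | ∃ ξ : ℝ, 0 < ξ ∧ y = Ftil ξ / ξ ^ 2} σ₁ ∧
      ∀ ξ : ℝ, 0 ≤ ξ → Ftil ξ ≤ σ₁ * ξ ^ 2 ∧ ftil ξ ≤ 2 * σ₁ * ξ := by
  obtain rfl : ftil = truncation f a := funext hftil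
  have hFtilF : ∀ ξ ∈ Icc 0 a, Ftil ξ = F ξ := fun ξ hξ ↦ by
    rw [hFtil, hF, integral_truncation_of_le hξ]
  have hanti : AntitoneOn (fun t ↦ F t / t ^ 2) (Ioc 0 a) :=
    fun x hx y hy hxy ↦ hmono x y hx.1 hxy hy.2
  have hF_le : ∀ ξ ∈ Ioc 0 a, F ξ ≤ σ₁ * ξ ^ 2 :=
    fun ξ ↦ le_mul_sq_of_antitoneOn_div_sq hanti hσ₁
  have hf_le : ∀ ξ ∈ Ioc 0 a, f ξ ≤ 2 * σ₁ * ξ := fun ξ hξ ↦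
    le_two_mul_of_antitoneOn_div_sq (funext hF ▸ hf_cont.hasDerivAt_intervalIntegral_Ici hξ.1)
      hanti hσ₁ hξ
  have hσ₁_nonneg : 0 ≤ σ₁ := by
    have hFa : 0 ≤ F a := hF a ▸ intervalIntegral.integral_nonneg ha.le fun t ht ↦ hf_nonneg t ht.1
    exact nonneg_of_mul_nonneg_left (hFa.trans (hF_le a ⟨ha, le_rfl⟩)) (by positivity)
  have hFtil_le : ∀ ξ, 0 ≤ ξ → Ftil ξ ≤ σ₁ * ξ ^ 2 := fun ξ hξ ↦ hFtil ξ ▸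
    integral_truncation_le_mul_sq
      ((hf_cont.mono Icc_subset_Ici_self).intervalIntegrable_of_Icc ha.le) ha hσ₁_nonneg
      (fun ξ hξ ↦ hF ξ ▸ hF_le ξ hξ) (hf_le a ⟨ha, le_rfl⟩) hξ
  refine ⟨⟨?_, fun b hb ↦ ?_⟩,
    fun ξ hξ ↦ ⟨hFtil_le ξ hξ, truncation_le_two_mul ha hσ₁_nonneg hf_le hξ⟩⟩
  · rintro _ ⟨ξ, hξ, rfl⟩
    exact (div_le_iff₀ (by positivity)).mpr (hFtil_le ξ hξ.le)
  · refine le_of_tendsto hσ₁ (mem_of_superset (Ioc_mem_nhdsGT ha) fun ξ hξ ↦ ?_)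
    show F ξ / ξ ^ 2 ≤ b
    exact hFtilF ξ (Ioc_subset_Icc_self hξ) ▸ hb ⟨ξ, hξ.1, rfl⟩

/-- If `ξ ↦ F ξ / ξ²` is non-increasing on `(0, a]` and `σ₁ = lim_{ξ→0⁺} F ξ / ξ²` exists
(finite), then `σ₁ = sup_{ξ > 0} F̃ ξ / ξ²`, and `F̃ ξ ≤ σ₁ ξ²`, `f̃ ξ ≤ 2 σ₁ ξ` for all
`ξ ≥ 0`, where `f̃` is the truncation of `f` at `a` and `F̃` its primitive. -/
theorem stmt_4
    (f : ℝ → ℝ) (hf_cont : ContinuousOn f (Set.Ici 0))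
    (hf_nonneg : ∀ ξ ≥ (0:ℝ), 0 ≤ f ξ) (hf0 : f 0 = 0)
    (F : ℝ → ℝ) (hF : ∀ ξ, F ξ = ∫ t in (0:ℝ)..ξ, f t)
    (a : ℝ) (ha : 0 < a)
    (hmono : ∀ ξ₁ ξ₂ : ℝ, 0 < ξ₁ → ξ₁ ≤ ξ₂ → ξ₂ ≤ a → F ξ₂ / ξ₂ ^ 2 ≤ F ξ₁ / ξ₁ ^ 2)
    (ftil : ℝ → ℝ)
    (hftil : ∀ ξ : ℝ, ftil ξ = if ξ ≤ 0 then 0 else if ξ ≤ a then f ξ else f a)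
    (Ftil : ℝ → ℝ) (hFtil : ∀ ξ, Ftil ξ = ∫ t in (0:ℝ)..ξ, ftil t)
    (σ₁ : ℝ)
    (hσ₁ : Tendsto (fun ξ => F ξ / ξ ^ 2) (nhdsWithin 0 (Set.Ioi 0)) (𝓝 σ₁)) :
    IsLUB {y : ℝ | ∃ ξ : ℝ, 0 < ξ ∧ y = Ftil ξ / ξ ^ 2} σ₁ ∧
      ∀ ξ : ℝ, 0 ≤ ξ → Ftil ξ ≤ σ₁ * ξ ^ 2 ∧ ftil ξ ≤ 2 * σ₁ * ξ :=
  stmt_4_general f hf_cont hf_nonneg F hF a ha hmono ftil hftil Ftil hFtil σ₁ hσ₁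
end

section
/- Let X and Y be real Hilbert spaces and T : X → Y a compact bounded linear operator with T ≠ 0. Then there exists φ ∈ X with ‖Tφ‖_Y = 1 such that ‖φ‖_X² = inf{‖u‖_X² : u ∈ X, ‖Tu‖_Y = 1}, and φ satisfies the Euler equation ⟨φ, v⟩_X = ‖φ‖_X² · ⟨Tφ, Tv⟩_Y for every v ∈ X. -/
/-! Put `l = ‖T‖`. For `‖u‖ ≤ 1` the identity `⟪T† T u, u⟫ = ‖T u‖²` gives
`‖T† T u - l² u‖² ≤ 2 l² (l² - ‖T u‖²)`, so a maximizing sequence `uₙ` for `‖T u‖` on the unit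
ball is an approximate eigenvector: `T† T uₙ - l² uₙ → 0`. By compactness `T uₙ` converges along
a subsequence, hence so does `l² uₙ`, and the limit `x` satisfies `‖T x‖ = l`, `T† T x = l² x`.
The minimizer is `φ = x / l`, and the lower bound `‖u‖ ≥ 1 / l` on `{‖T u‖ = 1}` is just
`1 = ‖T u‖ ≤ l ‖u‖`. -/

open Filter Topology ContinuousLinearMap
open scoped InnerProduct

namespace ContinuousLinearMap

section Normed

variable {𝕜 E F : Type*} [NontriviallyNormedField 𝕜] [SeminormedAddCommGroup E] [NormedSpace 𝕜 E]
  [SeminormedAddCommGroup F] [NormedSpace 𝕜 F]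

theorem inv_sq_opNorm_le_norm_sq_of_norm_apply_eq_one (T : E →L[𝕜] F) {u : E}
    (hu : ‖T u‖ = 1) : (‖T‖ ^ 2)⁻¹ ≤ ‖u‖ ^ 2 := by
  have h1 : 1 ≤ ‖T‖ * ‖u‖ := hu ▸ T.le_opNorm u
  have hT : 0 < ‖T‖ := by
    by_contra! h
    nlinarith [norm_nonneg T, norm_nonneg u]
  rw [← inv_pow]
  gcongr
  rwa [inv_le_iff_one_le_mul₀ hT, mul_comm]

end Normed

theorem exists_seq_norm_le_one_tendsto_opNorm {𝕜 E F : Type*} [DenselyNormedField 𝕜]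
    [NormedAddCommGroup E] [NormedSpace 𝕜 E] [SeminormedAddCommGroup F] [NormedSpace 𝕜 F]
    (T : E →L[𝕜] F) :
    ∃ u : ℕ → E, (∀ n, ‖u n‖ ≤ 1) ∧ Tendsto (fun n => ‖T (u n)‖) atTop (𝓝 ‖T‖) := by
  have hseq (n : ℕ) : ∃ x : E, ‖x‖ < 1 ∧ ‖T‖ - 1 / (n + 1) < ‖T x‖ :=
    T.exists_lt_apply_of_lt_opNorm (sub_lt_self _ Nat.one_div_pos_of_nat)
  choose u hu hTu using hseq
  have hlower : Tendsto (fun n : ℕ => ‖T‖ - 1 / (n + 1)) atTop (𝓝 ‖T‖) := by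
    simpa using (tendsto_const_nhds (x := ‖T‖)).sub tendsto_one_div_add_atTop_nhds_zero_nat
  exact ⟨u, fun n => (hu n).le, tendsto_of_tendsto_of_tendsto_of_le_of_le hlower
    tendsto_const_nhds (fun n => (hTu n).le) fun n => T.unit_le_opNorm _ (hu n).le⟩

section InnerProduct

variable {𝕜 E F : Type*} [RCLike 𝕜] [NormedAddCommGroup E] [InnerProductSpace 𝕜 E]
  [CompleteSpace E] [NormedAddCommGroup F] [InnerProductSpace 𝕜 F] [CompleteSpace F]

theorem norm_adjoint_apply_apply_sub_smul_sq_le (T : E →L[𝕜] F) {u : E} (hu : ‖u‖ ≤ 1) :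
    ‖(T†) (T u) - (‖T‖ : 𝕜) ^ 2 • u‖ ^ 2 ≤ 2 * ‖T‖ ^ 2 * (‖T‖ ^ 2 - ‖T u‖ ^ 2) := by
  have hinner : RCLike.re (inner 𝕜 ((T†) (T u)) ((‖T‖ : 𝕜) ^ 2 • u)) = ‖T‖ ^ 2 * ‖T u‖ ^ 2 := by
    rw [inner_smul_right, adjoint_inner_left, inner_self_eq_norm_sq_to_K]
    norm_cast
  have hTTu : ‖(T†) (T u)‖ ≤ ‖T‖ ^ 2 := by
    calc ‖(T†) (T u)‖ = ‖((T†) ∘L T) u‖ := rfl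
      _ ≤ ‖(T†) ∘L T‖ := ((T†) ∘L T).unit_le_opNorm u hu
      _ = ‖T‖ ^ 2 := by rw [norm_adjoint_comp_self, sq]
  have hsmul : ‖(‖T‖ : 𝕜) ^ 2 • u‖ ≤ ‖T‖ ^ 2 := by
    rw [norm_smul, norm_pow, RCLike.norm_ofReal, abs_norm]
    exact mul_le_of_le_one_right (by positivity) hu
  rw [@norm_sub_sq 𝕜, hinner]
  nlinarith [norm_nonneg ((T†) (T u)), norm_nonneg ((‖T‖ : 𝕜) ^ 2 • u)]

theorem adjoint_apply_apply_eq_of_norm_apply_eq_opNorm (T : E →L[𝕜] F) {u : E}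
    (hu : ‖u‖ ≤ 1) (hTu : ‖T u‖ = ‖T‖) : (T†) (T u) = (‖T‖ : 𝕜) ^ 2 • u := by
  have h := T.norm_adjoint_apply_apply_sub_smul_sq_le hu
  rw [hTu, sub_self, mul_zero] at h
  exact sub_eq_zero.1 (norm_eq_zero.1 (pow_eq_zero_iff two_ne_zero |>.1
    (le_antisymm h (sq_nonneg _))))

theorem tendsto_adjoint_apply_apply_sub_smul_zero (T : E →L[𝕜] F) {u : ℕ → E}
    (hu : ∀ n, ‖u n‖ ≤ 1) (hlim : Tendsto (fun n => ‖T (u n)‖) atTop (𝓝 ‖T‖)) :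
    Tendsto (fun n => (T†) (T (u n)) - (‖T‖ : 𝕜) ^ 2 • u n) atTop (𝓝 0) := by
  rw [tendsto_zero_iff_norm_tendsto_zero]
  have hbound : Tendsto (fun n => √(2 * ‖T‖ ^ 2 * (‖T‖ ^ 2 - ‖T (u n)‖ ^ 2))) atTop (𝓝 0) := by
    have h := (((tendsto_const_nhds (x := ‖T‖ ^ 2)).sub (hlim.pow 2)).const_mul (2 * ‖T‖ ^ 2)).sqrt
    rwa [sub_self, mul_zero, Real.sqrt_zero] at h
  exact squeeze_zero (fun _ => norm_nonneg _)
    (fun n => Real.le_sqrt_of_sq_le (T.norm_adjoint_apply_apply_sub_smul_sq_le (hu n))) hbound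

end InnerProduct

end ContinuousLinearMap

theorem IsCompactOperator.exists_norm_le_one_norm_apply_eq_opNorm {𝕜 E F : Type*} [RCLike 𝕜]
    [NormedAddCommGroup E] [InnerProductSpace 𝕜 E] [CompleteSpace E]
    [NormedAddCommGroup F] [InnerProductSpace 𝕜 F] [CompleteSpace F]
    {T : E →L[𝕜] F} (hT : IsCompactOperator T) : ∃ x : E, ‖x‖ ≤ 1 ∧ ‖T x‖ = ‖T‖ := by
  obtain rfl | hT0 := eq_or_ne T 0
  · exact ⟨0, by simp⟩
  obtain ⟨u, hu, hlim⟩ := T.exists_seq_norm_le_one_tendsto_opNorm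
  obtain ⟨K, hK, hKsub⟩ := hT.image_closedBall_subset_compact (f := (T : E →ₗ[𝕜] F)) 1
  obtain ⟨y, -, g, hg, hy⟩ :=
    hK.tendsto_subseq fun n => hKsub ⟨u n, mem_closedBall_zero_iff.2 (hu n), rfl⟩
  set c : 𝕜 := (‖T‖ : 𝕜) ^ 2
  have hc : c ≠ 0 := pow_ne_zero _ (RCLike.ofReal_ne_zero.2 (norm_ne_zero_iff.2 hT0))
  have hcu : Tendsto (fun k => c • u (g k)) atTop (𝓝 ((T†) y)) := by
    simpa using ((T†).continuous.tendsto y |>.comp hy).sub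
      ((T.tendsto_adjoint_apply_apply_sub_smul_zero hu hlim).comp hg.tendsto_atTop)
  have hux : Tendsto (fun k => u (g k)) atTop (𝓝 (c⁻¹ • (T†) y)) := by
    simpa [smul_smul, inv_mul_cancel₀ hc] using hcu.const_smul c⁻¹
  exact ⟨_, le_of_tendsto' hux.norm fun k => hu (g k), tendsto_nhds_unique
    ((T.continuous.tendsto _).comp hux).norm (hlim.comp hg.tendsto_atTop)⟩

/-- The minimization problem (M): for a nonzero compact operator `T` between real Hilbert
spaces, the minimum of `‖u‖²` over `{u : ‖T u‖ = 1}` is attained at some `φ`, which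
satisfies the Euler equation `⟪φ, v⟫ = ‖φ‖² ⟪Tφ, Tv⟫` for all `v`. -/
theorem stmt_9
    {X Y : Type*} [NormedAddCommGroup X] [InnerProductSpace ℝ X] [CompleteSpace X]
    [NormedAddCommGroup Y] [InnerProductSpace ℝ Y] [CompleteSpace Y]
    (T : X →L[ℝ] Y) (hTcpt : IsCompactOperator (⇑T)) (hT0 : T ≠ 0) :
    ∃ φ : X, ‖T φ‖ = 1 ∧
      IsLeast {c : ℝ | ∃ u : X, ‖T u‖ = 1 ∧ c = ‖u‖ ^ 2} (‖φ‖ ^ 2) ∧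
      ∀ v : X, (inner ℝ φ v : ℝ) = ‖φ‖ ^ 2 * (inner ℝ (T φ) (T v) : ℝ) := by
  set l := ‖T‖
  have hl : 0 < l := norm_pos_iff.2 hT0
  obtain ⟨x, hx, hTx⟩ := hTcpt.exists_norm_le_one_norm_apply_eq_opNorm
  have hEig : (T†) (T x) = l ^ 2 • x := T.adjoint_apply_apply_eq_of_norm_apply_eq_opNorm hx hTx
  set φ := l⁻¹ • x
  have hTφ : ‖T φ‖ = 1 := by
    rw [map_smul, norm_smul, hTx, norm_inv, Real.norm_of_nonneg hl.le, inv_mul_cancel₀ hl.ne']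
  have hEuler (v : X) : inner ℝ (T φ) (T v) = l ^ 2 * inner ℝ φ v := by
    rw [← adjoint_inner_left, map_smul, map_smul, hEig, smul_comm, real_inner_smul_left]
  have hφ : ‖φ‖ ^ 2 = (l ^ 2)⁻¹ := by
    have h := hEuler φ
    rw [real_inner_self_eq_norm_sq, real_inner_self_eq_norm_sq, hTφ] at h
    field_simp
    linarith
  refine ⟨φ, hTφ, ⟨⟨φ, hTφ, rfl⟩, ?_⟩, fun v => ?_⟩
  · rintro _ ⟨u, hu, rfl⟩
    exact hφ ▸ T.inv_sq_opNorm_le_norm_sq_of_norm_apply_eq_one hu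
  · rw [hEuler, hφ, inv_mul_cancel_left₀ (by positivity)]
end
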